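/- arXiv:2303.04860 — 2 statements merged into one kernel-verified Lean document; each statement's English description precedes it below -/
import Mathlib

section
/- Let Γ be an abelian group and k ≥ 1. On the set X := SML_0(Γ,ℝ/ℤ) × SML_1(Γ,ℝ/ℤ) × ⋯ × SML_k(Γ,ℝ/ℤ) of tuples (b_i)_{i=0}^k with b_i a symmetric multilinear map Γ^i → ℝ/ℤ, define for γ ∈ Γ the map T^γ : X → X by T^γ((b_i)_{i=0}^k) := ( ∑_{j=0}^{k−i} C(k−i, j)·b_{i+j}(γ^{×j}, ·) )_{i=0}^k, where b_{i+j}(γ^{×j}, ·) ∈ SML_i(Γ,ℝ/ℤ) is the partial evaluation of b_{i+j} with γ placed in j of its slots. Then T^γ ∘ T^{γ'} = T^{γ+γ'} for all γ, γ' ∈ Γ and T^0 = id, so T defines an action of Γ on X. -/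
/-- `b : Γ^m → H` is multilinear if it is a group homomorphism in each coordinate. -/
def IsMultilinear {Γ H : Type*} [AddCommGroup Γ] [AddCommGroup H] {m : ℕ}
    (b : (Fin m → Γ) → H) : Prop :=
  ∀ (i : Fin m) (g : Fin m → Γ) (x y : Γ),
    b (Function.update g i (x + y)) = b (Function.update g i x) + b (Function.update g i y)

/-- `b : Γ^m → H` is symmetric if it is invariant under all permutations of its arguments. -/
def IsSymmetric {Γ H : Type*} {m : ℕ} (b : (Fin m → Γ) → H) : Prop :=
  ∀ (σ : Equiv.Perm (Fin m)) (g : Fin m → Γ), b (g ∘ σ) = b g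

/-- The shift `T^γ` on tuples `(b_i)_{i=0}^k` of maps `b_i : Γ^i → ℝ/ℤ`:
`T^γ((b_i)_i) = (∑_{j=0}^{k−i} C(k−i, j) • b_{i+j}(γ^{×j}, ·))_i`, where
`b_{i+j}(γ^{×j}, ·)` denotes partial evaluation of `b_{i+j}` with `γ` placed in `j`
of its slots.  (The sum is written over all indices `l = i + j` with `i ≤ l ≤ k`.) -/
noncomputable def Tact {Γ : Type*} [AddCommGroup Γ] (k : ℕ) (γ : Γ)
    (b : ∀ i : Fin (k + 1), (Fin (i : ℕ) → Γ) → AddCircle (1 : ℝ)) :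
    ∀ i : Fin (k + 1), (Fin (i : ℕ) → Γ) → AddCircle (1 : ℝ) :=
  fun i => ∑ l : Fin (k + 1),
    if h : (i : ℕ) ≤ (l : ℕ) then
      ((k - (i : ℕ)).choose ((l : ℕ) - (i : ℕ))) •
        fun g : Fin (i : ℕ) → Γ =>
          b l (fun t => Fin.append (fun _ : Fin ((l : ℕ) - (i : ℕ)) => γ) g
                (Fin.cast (Nat.sub_add_cancel h).symm t))
    else 0

/-!
A symmetric map on `Γ^m` only sees the multiset of its arguments, so we evaluate it on lists
(`evalList`) and rearrange them freely. Multilinearity and symmetry give the binomial expansion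
`b((γ + γ')^{×n}, ·) = ∑_{p+q=n} C(n,p) b(γ^{×p}, γ'^{×q}, ·)`, after which comparing the
coefficients of `b_m(γ^{×p}, γ'^{×q}, ·)` in `T^γ T^{γ'} b` and `T^{γ+γ'} b` reduces the action law
to `C(k-i,p) C(k-i-p,q) = C(k-i,p+q) C(p+q,p)`. `T^0 = id` because a multilinear map vanishes as
soon as one argument is `0`.
-/

open Finset

theorem Fin.append_update_right {α : Type*} {a n : ℕ} (u : Fin a → α) (g : Fin n → α)
    (j : Fin n) (x : α) :
    Fin.append u (Function.update g j x) = Function.update (Fin.append u g) (Fin.natAdd a j) x := by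
  funext t
  refine Fin.addCases (fun s => ?_) (fun s => ?_) t
  · have : Fin.castAdd n s ≠ Fin.natAdd a j := Fin.ne_of_val_ne (by simp; omega)
    simp [this]
  · simp [Function.update_apply]

theorem sum_fin_ite_eq_sum_antidiagonal {M : Type*} [AddCommMonoid M] {k i m : ℕ} (him : i ≤ m)
    (hmk : m ≤ k) (f : ℕ → ℕ → M) :
    ∑ l : Fin (k + 1), (if i ≤ (l : ℕ) ∧ (l : ℕ) ≤ m then f (l - i) (m - l) else 0)
      = ∑ pq ∈ antidiagonal (m - i), f pq.1 pq.2 := by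
  have hfilter : (range (k + 1)).filter (fun l => i ≤ l ∧ l ≤ m) = Ico i (m + 1) := by
    ext l; simp; omega
  rw [Fin.sum_univ_eq_sum_range (fun l => if i ≤ l ∧ l ≤ m then f (l - i) (m - l) else 0),
    ← sum_filter, hfilter, sum_Ico_eq_sum_range, Nat.sum_antidiagonal_eq_sum_range_succ,
    show m + 1 - i = (m - i).succ by omega]
  refine sum_congr rfl fun r hr => ?_
  rw [mem_range] at hr
  congr 1 <;> omega

section EvalList

variable {Γ H : Type*} [Zero Γ]

/-- `b` evaluated at a list of arguments; only meaningful when `L.length = m` (otherwise `L` is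
truncated or padded with zeros). -/
def evalList {m : ℕ} (b : (Fin m → Γ) → H) (L : List Γ) : H := b fun t => L.getD t 0

theorem evalList_ofFn {m : ℕ} (b : (Fin m → Γ) → H) (g : Fin m → Γ) :
    evalList b (List.ofFn g) = b g := by
  simp [evalList]

theorem List.ofFn_getD_of_length_eq {m : ℕ} {L : List Γ} (hL : L.length = m) :
    List.ofFn (fun t : Fin m => L.getD t 0) = L := by
  subst hL
  simp

theorem apply_append_cast_eq_evalList {a n m : ℕ} (b : (Fin m → Γ) → H) (h : m = a + n)
    (u : Fin a → Γ) (g : Fin n → Γ) :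
    b (fun t => Fin.append u g (Fin.cast h t)) = evalList b (List.ofFn u ++ List.ofFn g) := by
  rw [← List.ofFn_fin_append, List.ofFn_congr h.symm, evalList_ofFn]

theorem List.getD_append_swap (P l : List Γ) (x y : Γ) (t : ℕ) :
    (P ++ y :: x :: l).getD t 0 = (P ++ x :: y :: l).getD
      (if t = P.length then P.length + 1 else if t = P.length + 1 then P.length else t) 0 := by
  rcases lt_trichotomy t P.length with ht | rfl | ht
  · rw [if_neg ht.ne, if_neg (by omega), List.getD_append _ _ _ _ ht, List.getD_append _ _ _ _ ht]
  · simp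
  · rw [if_neg ht.ne', List.getD_append_right _ _ _ _ ht.le]
    split_ifs with h
    · subst h; simp
    · obtain ⟨s, rfl⟩ : ∃ s, t = P.length + 2 + s := ⟨t - (P.length + 2), by omega⟩
      rw [List.getD_append_right _ _ _ _ ht.le,
        show P.length + 2 + s - P.length = s + 1 + 1 by omega]
      simp

theorem IsSymmetric.evalList_perm {m : ℕ} {b : (Fin m → Γ) → H} (hb : IsSymmetric b)
    {L L' : List Γ} (hLL' : L.Perm L') (hL : L.length = m) : evalList b L = evalList b L' := by
  -- the prefix `P` lets the `cons` step of the induction keep the length fixed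
  suffices ∀ P : List Γ, P.length + L.length = m → evalList b (P ++ L) = evalList b (P ++ L') by
    simpa using this [] (by simpa using hL)
  clear hL
  induction hLL' with
  | nil => intros; rfl
  | cons x _ ih =>
    intro P hP
    simpa using ih (P ++ [x]) (by simp at hP ⊢; omega)
  | swap x y l =>
    intro P hP
    simp only [List.length_cons] at hP
    have := hb (Equiv.swap ⟨P.length, by omega⟩ ⟨P.length + 1, by omega⟩)
      (fun t => (P ++ x :: y :: l).getD t 0)
    rw [evalList, evalList, ← this]
    congr 1
    funext t
    rw [Function.comp_apply, Equiv.swap_apply_def, List.getD_append_swap]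
    split_ifs <;> simp_all [Fin.ext_iff]
  | trans h₁ _ ih₁ ih₂ =>
    intro P hP
    rw [ih₁ P hP, ih₂ P (by rw [← h₁.length_eq]; exact hP)]

end EvalList

section Multilinear

variable {Γ H : Type*} [AddCommGroup Γ] [AddCommGroup H]

theorem IsMultilinear.evalList_add_cons {m : ℕ} {b : (Fin m → Γ) → H} (hb : IsMultilinear b)
    {L : List Γ} (hL : L.length + 1 = m) (x y : Γ) :
    evalList b ((x + y) :: L) = evalList b (x :: L) + evalList b (y :: L) := by
  subst hL
  have key : ∀ z : Γ, (fun t : Fin (L.length + 1) => (z :: L).getD t 0)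
      = Function.update (fun t : Fin (L.length + 1) => (0 :: L).getD t 0) 0 z := by
    intro z
    funext t
    cases t using Fin.cases <;> simp
  rw [evalList, evalList, evalList, key (x + y), key x, key y]
  exact hb 0 _ x y

theorem IsMultilinear.evalList_zero_cons {m : ℕ} {b : (Fin m → Γ) → H} (hb : IsMultilinear b)
    {L : List Γ} (hL : L.length + 1 = m) : evalList b (0 :: L) = 0 := by
  simpa using hb.evalList_add_cons hL 0 0

theorem evalList_replicate_add {m : ℕ} {b : (Fin m → Γ) → H} (hm : IsMultilinear b)
    (hs : IsSymmetric b) (x y : Γ) (c : ℕ) {L : List Γ} (hL : c + L.length = m) :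
    evalList b (List.replicate c (x + y) ++ L) =
      ∑ pq ∈ antidiagonal c,
        c.choose pq.1 • evalList b (List.replicate pq.1 x ++ List.replicate pq.2 y ++ L) := by
  induction c generalizing L with
  | zero => simp
  | succ c ih =>
    have hexpand : ∀ p q, (List.replicate p x ++ List.replicate q y ++ L).length + 1 = m →
        evalList b (List.replicate p x ++ List.replicate q y ++ (x + y) :: L)
          = evalList b (List.replicate (p + 1) x ++ List.replicate q y ++ L)
            + evalList b (List.replicate p x ++ List.replicate (q + 1) y ++ L) := by
      intro p q hpq
      rw [hs.evalList_perm List.perm_middle (by simp at hpq ⊢; omega), hm.evalList_add_cons hpq]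
      congr 1
      exact hs.evalList_perm (by simpa [List.replicate_succ] using List.perm_middle.symm)
        (by simp at hpq ⊢; omega)
    rw [sum_antidiagonal_choose_succ_nsmul
      (fun p q => evalList b (List.replicate p x ++ List.replicate q y ++ L)), List.replicate_succ,
      List.cons_append, hs.evalList_perm List.perm_middle.symm (by simp; omega),
      ih (by simp; omega), ← sum_add_distrib]
    refine sum_congr rfl fun pq hpq => ?_
    rw [HasAntidiagonal.mem_antidiagonal] at hpq
    rw [hexpand pq.1 pq.2 (by simp; omega), smul_add, add_comm,
      Nat.choose_symm_of_eq_add hpq.symm]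

variable (Γ H) in
/-- `SML_m(Γ, H)` -/
def symmMultilinear (m : ℕ) : AddSubmonoid ((Fin m → Γ) → H) where
  carrier := {b | IsMultilinear b ∧ IsSymmetric b}
  zero_mem' := ⟨fun _ _ _ _ => (add_zero 0).symm, fun _ _ => rfl⟩
  add_mem' {b c} hb hc :=
    ⟨fun j g x y => by simp only [Pi.add_apply, hb.1 j g x y, hc.1 j g x y]; abel,
     fun σ g => by simp only [Pi.add_apply, hb.2 σ g, hc.2 σ g]⟩

theorem comp_append_mem_symmMultilinear {a n m : ℕ} {b : (Fin m → Γ) → H}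
    (hb : b ∈ symmMultilinear Γ H m) (h : m = a + n) (u : Fin a → Γ) :
    (fun g : Fin n → Γ => b fun t => Fin.append u g (Fin.cast h t)) ∈ symmMultilinear Γ H n := by
  refine ⟨fun j g x y => ?_, fun σ g => ?_⟩
  · have key : ∀ z, (fun t => Fin.append u (Function.update g j z) (Fin.cast h t))
        = Function.update (fun t => Fin.append u g (Fin.cast h t))
            (Fin.cast h.symm (Fin.natAdd a j)) z := by
      intro z
      rw [Fin.append_update_right]
      simpa [Function.comp_def] using Function.update_comp_eq_of_injective (Fin.append u g)
        (Fin.cast_injective h) (Fin.cast h.symm (Fin.natAdd a j)) z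
    simp only [key]
    exact hb.1 _ _ x y
  · simp only [apply_append_cast_eq_evalList]
    exact hb.2.evalList_perm ((Equiv.Perm.ofFn_comp_perm σ g).append_left _) (by simp [h])

end Multilinear

section Tact

variable {Γ : Type*} [AddCommGroup Γ] {k : ℕ}

theorem Tact_mem_symmMultilinear (γ : Γ)
    {b : ∀ i : Fin (k + 1), (Fin i → Γ) → AddCircle (1 : ℝ)}
    (hb : ∀ l : Fin (k + 1), b l ∈ symmMultilinear Γ (AddCircle (1 : ℝ)) l) (i : Fin (k + 1)) :
    Tact k γ b i ∈ symmMultilinear Γ (AddCircle (1 : ℝ)) i := by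
  refine sum_mem fun l _ => ?_
  split_ifs
  · exact nsmul_mem (comp_append_mem_symmMultilinear (hb l) _ _) _
  · exact zero_mem _

theorem evalList_Tact (γ : Γ) (b : ∀ i : Fin (k + 1), (Fin i → Γ) → AddCircle (1 : ℝ))
    (i : Fin (k + 1)) {L : List Γ} (hL : L.length = i) :
    evalList (Tact k γ b i) L = ∑ l : Fin (k + 1),
      if (i : ℕ) ≤ l then (k - i).choose (l - i) • evalList (b l) (List.replicate (l - i) γ ++ L)
      else 0 := by
  rw [evalList, Tact, Finset.sum_apply]
  refine sum_congr rfl fun l _ => ?_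
  split_ifs
  · rw [Pi.smul_apply, apply_append_cast_eq_evalList (b l), List.ofFn_const,
      List.ofFn_getD_of_length_eq hL]
  · rfl

theorem Tact_zero {b : ∀ i : Fin (k + 1), (Fin i → Γ) → AddCircle (1 : ℝ)}
    (hb : ∀ l, IsMultilinear (b l)) : Tact k 0 b = b := by
  funext i g
  rw [← evalList_ofFn (Tact k 0 b i), evalList_Tact 0 b i List.length_ofFn, sum_eq_single i]
  · simp [evalList_ofFn]
  · intro l _ hli
    split_ifs
    · obtain ⟨n, hn⟩ : ∃ n, (l : ℕ) - i = n + 1 :=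
        ⟨l - i - 1, by have := Fin.val_ne_of_ne hli; omega⟩
      rw [hn, List.replicate_succ, List.cons_append, (hb l).evalList_zero_cons (by simp; omega),
        smul_zero]
    · rfl
  · simp

theorem Tact_add (γ γ' : Γ) {b : ∀ i : Fin (k + 1), (Fin i → Γ) → AddCircle (1 : ℝ)}
    (hb : ∀ l : Fin (k + 1), b l ∈ symmMultilinear Γ (AddCircle (1 : ℝ)) l) :
    Tact k γ (Tact k γ' b) = Tact k (γ + γ') b := by
  funext i g
  rw [← evalList_ofFn (Tact k γ (Tact k γ' b) i), ← evalList_ofFn (Tact k (γ + γ') b i),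
    evalList_Tact _ _ _ List.length_ofFn, evalList_Tact _ _ _ List.length_ofFn]
  set L := List.ofFn g
  have hexpand : ∀ l : Fin (k + 1),
      (if (i : ℕ) ≤ l then
        (k - i).choose (l - i) • evalList (Tact k γ' b l) (List.replicate (l - i) γ ++ L) else 0)
      = ∑ m : Fin (k + 1), if (i : ℕ) ≤ l ∧ (l : ℕ) ≤ m then
          ((k - i).choose (l - i) * (k - i - (l - i)).choose (m - l)) •
            evalList (b m) (List.replicate (l - i) γ ++ List.replicate (m - l) γ' ++ L) else 0 := by
    intro l
    split_ifs with hil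
    · rw [evalList_Tact _ _ _ (by simp [L]; omega), smul_sum]
      refine sum_congr rfl fun m _ => ?_
      split_ifs with hlm hlm' hlm'
      · rw [smul_smul, show k - i - (l - i) = k - l by omega, ← List.append_assoc,
          (hb m).2.evalList_perm (List.perm_append_comm.append_right L) (by simp [L]; omega)]
      · exact absurd ⟨hil, hlm⟩ hlm'
      · exact absurd hlm'.2 hlm
      · exact smul_zero _
    · exact (sum_eq_zero fun m _ => if_neg fun h => hil h.1).symm
  rw [sum_congr rfl fun l _ => hexpand l, sum_comm]
  refine sum_congr rfl fun m _ => ?_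
  split_ifs with him
  · rw [sum_fin_ite_eq_sum_antidiagonal him m.is_le (fun p q =>
        ((k - i).choose p * (k - i - p).choose q) •
          evalList (b m) (List.replicate p γ ++ List.replicate q γ' ++ L)),
      evalList_replicate_add (hb m).1 (hb m).2 _ _ _ (by simp [L]; omega), smul_sum]
    refine sum_congr rfl fun pq hpq => ?_
    rw [HasAntidiagonal.mem_antidiagonal] at hpq
    rw [smul_smul, ← hpq, Nat.choose_mul (Nat.le_add_right _ _), Nat.add_sub_cancel_left]
  · exact sum_eq_zero fun l _ => if_neg fun h => him (h.1.trans h.2)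

end Tact

theorem Tact_is_action_general {Γ : Type*} [AddCommGroup Γ] (k : ℕ)
    (b : ∀ i : Fin (k + 1), (Fin (i : ℕ) → Γ) → AddCircle (1 : ℝ))
    (hb : ∀ i : Fin (k + 1), IsMultilinear (b i) ∧ IsSymmetric (b i)) :
    (∀ (γ : Γ) (i : Fin (k + 1)),
        IsMultilinear (Tact k γ b i) ∧ IsSymmetric (Tact k γ b i)) ∧
    (∀ γ γ' : Γ, Tact k γ (Tact k γ' b) = Tact k (γ + γ') b) ∧
    Tact k (0 : Γ) b = b :=
  ⟨fun γ => Tact_mem_symmMultilinear γ hb, fun γ γ' => Tact_add γ γ' hb,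
    Tact_zero fun l => (hb l).1⟩

/-- On the space `X = SML_0(Γ,ℝ/ℤ) × ⋯ × SML_k(Γ,ℝ/ℤ)` of tuples of symmetric
multilinear maps, the maps `T^γ` preserve `X` and satisfy `T^γ ∘ T^{γ'} = T^{γ+γ'}` and
`T^0 = id`, so `T` defines an action of `Γ` on `X`. -/
theorem Tact_is_action {Γ : Type*} [AddCommGroup Γ] (k : ℕ) (hk : 1 ≤ k)
    (b : ∀ i : Fin (k + 1), (Fin (i : ℕ) → Γ) → AddCircle (1 : ℝ))
    (hb : ∀ i : Fin (k + 1), IsMultilinear (b i) ∧ IsSymmetric (b i)) :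
    (∀ (γ : Γ) (i : Fin (k + 1)),
        IsMultilinear (Tact k γ b i) ∧ IsSymmetric (Tact k γ b i)) ∧
    (∀ γ γ' : Γ, Tact k γ (Tact k γ' b) = Tact k (γ + γ') b) ∧
    Tact k (0 : Γ) b = b :=
  Tact_is_action_general k b hb
end

section
/- Let Γ be an abelian group, k ≥ 1, and let X := SML_0(Γ,ℝ/ℤ) × SML_1(Γ,ℝ/ℤ) × ⋯ × SML_k(Γ,ℝ/ℤ) with the Γ-action T^γ((b_i)_{i=0}^k) := ( ∑_{j=0}^{k−i} C(k−i, j)·b_{i+j}(γ^{×j}, ·) )_{i=0}^k. Let P : X → ℝ/ℤ be the evaluation of the first coordinate, P((b_i)_{i=0}^k) := b_0. Then for every point x = (b_i)_{i=0}^k ∈ X and all γ_1,…,γ_k ∈ Γ one has ∂_{γ_1}⋯∂_{γ_k} P(x) = k!·b_k(γ_1,…,γ_k), where ∂_γ P := P ∘ T^γ − P; in particular, since the top coordinate b_k is fixed by the action, ∂_{γ_1}⋯∂_{γ_{k+1}} P = 0 for all γ_1,…,γ_{k+1} ∈ Γ. -/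
/-- The derivative along a map: `∂_S f (x) = f(S x) - f(x)`. -/
def actDeriv {X M : Type*} [AddCommGroup M] (S : X → X) (f : X → M) : X → M :=
  fun x => f (S x) - f x

/-- Iterated derivative `∂_{γ_1} ⋯ ∂_{γ_j} f` with respect to an action `T` of `Γ` on `X`. -/
def actDerivIter {Γ X M : Type*} [AddCommGroup M] (T : Γ → X → X) :
    (j : ℕ) → (Fin j → Γ) → (X → M) → (X → M)
  | 0, _, f => f
  | j + 1, γ, f => actDerivIter T j (fun i => γ i.succ) (actDeriv (T (γ 0)) f)

/-- Evaluation of the first coordinate `P((b_i)_{i=0}^k) = b_0`. -/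
noncomputable def evalZero {Γ : Type*} [AddCommGroup Γ] (k : ℕ)
    (b : ∀ i : Fin (k + 1), (Fin (i : ℕ) → Γ) → AddCircle (1 : ℝ)) : AddCircle (1 : ℝ) :=
  b ⟨0, Nat.succ_pos k⟩ Fin.elim0

/-!
Differentiating the coordinate functional `b ↦ b_l(g)` along `T^γ` gives a combination of the
higher coordinates `b ↦ b_{l'}(γ, …, γ, g)`, `l' > l`, with coefficients `C(k - l, l' - l)`.
So every derivative raises the coordinate index by at least one: after `j` derivatives with
`l + j > k` nothing is left, and when `l + j = k` only the chain `l, l + 1, …, k` survives, with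
coefficient `(k - l)(k - l - 1)⋯1 = (k - l)!`. It ends at `b_k` evaluated at `γ_{j-1}, …, γ_0, g`,
and symmetry of `b_k` undoes the reversal.
-/

section Linearity

variable {Γ X M : Type*} [AddCommGroup M]

lemma actDeriv_add (S : X → X) (f g : X → M) :
    actDeriv S (f + g) = actDeriv S f + actDeriv S g := by
  funext x
  simp only [actDeriv, Pi.add_apply]
  abel

lemma actDerivIter_add (T : Γ → X → X) (j : ℕ) (γ : Fin j → Γ) (f g : X → M) :
    actDerivIter T j γ (f + g) = actDerivIter T j γ f + actDerivIter T j γ g := by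
  induction j generalizing f g with
  | zero => rfl
  | succ j ih => simp only [actDerivIter, actDeriv_add, ih]

lemma actDerivIter_sum {ι : Type*} (T : Γ → X → X) (j : ℕ) (γ : Fin j → Γ) (s : Finset ι)
    (F : ι → X → M) :
    actDerivIter T j γ (∑ i ∈ s, F i) = ∑ i ∈ s, actDerivIter T j γ (F i) :=
  map_sum (AddMonoidHom.mk' (actDerivIter T j γ) (actDerivIter_add T j γ)) F s

lemma actDerivIter_nsmul (T : Γ → X → X) (j : ℕ) (γ : Fin j → Γ) (n : ℕ) (f : X → M) :
    actDerivIter T j γ (n • f) = n • actDerivIter T j γ f :=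
  map_nsmul (AddMonoidHom.mk' (actDerivIter T j γ) (actDerivIter_add T j γ)) n f

lemma actDerivIter_zero (T : Γ → X → X) (j : ℕ) (γ : Fin j → Γ) :
    actDerivIter T j γ (0 : X → M) = 0 :=
  map_zero (AddMonoidHom.mk' (actDerivIter T j γ) (actDerivIter_add T j γ))

end Linearity

lemma Fin.append_cast_apply {α : Type*} {m n N : ℕ} (e : N = m + n) (u : Fin m → α)
    (v : Fin n → α) (t : Fin N) :
    Fin.append u v (Fin.cast e t) =
      if h : (t : ℕ) < m then u ⟨t, h⟩ else v ⟨t - m, by omega⟩ := by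
  split_ifs with h
  · exact Fin.append_left u v ⟨t, h⟩
  · have ht : Fin.cast e t = Fin.natAdd m ⟨t - m, by omega⟩ := by
      ext
      simp only [Fin.val_cast, Fin.val_natAdd]
      omega
    rw [ht, Fin.append_right]

section Tuples

variable {α : Type*}

def padLeft {l l' : ℕ} (γ : α) (g : Fin l → α) (h : l ≤ l') : Fin l' → α :=
  fun t => Fin.append (fun _ : Fin (l' - l) => γ) g (Fin.cast (Nat.sub_add_cancel h).symm t)

lemma padLeft_self {l : ℕ} (γ : α) (g : Fin l → α) : padLeft γ g le_rfl = g := by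
  funext t
  simp only [padLeft, Fin.append_cast_apply, Nat.sub_self, Nat.not_lt_zero, dite_false,
    Nat.sub_zero]

def revAppend {j l n : ℕ} (γ : Fin j → α) (g : Fin l → α) (h : n = j + l) : Fin n → α :=
  Fin.append (γ ∘ Fin.rev) g ∘ Fin.cast h

lemma revAppend_succ {j l n : ℕ} (γ : Fin (j + 1) → α) (g : Fin l → α) (h : n = j + (l + 1))
    (h' : n = (j + 1) + l) :
    revAppend (fun i => γ i.succ) (padLeft (γ 0) g (Nat.le_succ l)) h = revAppend γ g h' := by
  funext t
  simp only [revAppend, padLeft, Function.comp_apply, Fin.append_cast_apply]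
  split_ifs <;> first | omega | (congr 1; ext; simp only [Fin.val_succ, Fin.val_rev, Fin.val_zero]; omega)

end Tuples

section Coordinates

variable {Γ : Type*} [AddCommGroup Γ] {k : ℕ}

abbrev MapTuple (Γ : Type*) (k : ℕ) := ∀ i : Fin (k + 1), (Fin (i : ℕ) → Γ) → AddCircle (1 : ℝ)

def coord (l : Fin (k + 1)) (g : Fin l → Γ) : MapTuple Γ k → AddCircle (1 : ℝ) :=
  fun b => b l g

lemma Tact_apply (γ : Γ) (b : MapTuple Γ k) (i : Fin (k + 1)) (g : Fin i → Γ) :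
    Tact k γ b i g = ∑ l : Fin (k + 1),
      if h : (i : ℕ) ≤ l then (k - i).choose (l - i) • b l (padLeft γ g h) else 0 := by
  simp only [Tact, Finset.sum_apply, dite_apply, Pi.smul_apply, Pi.zero_apply]
  rfl

lemma actDeriv_Tact_coord (γ : Γ) (l : Fin (k + 1)) (g : Fin l → Γ) :
    actDeriv (Tact k γ) (coord l g) = ∑ l' : Fin (k + 1),
      if h : (l : ℕ) < l' then (k - l).choose (l' - l) • coord l' (padLeft γ g h.le) else 0 := by
  funext b
  have hsplit : ∀ l' : Fin (k + 1),
      (if h : (l : ℕ) ≤ l' then (k - l).choose (l' - l) • b l' (padLeft γ g h) else 0) =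
        (if l' = l then b l g else 0) +
          if h : (l : ℕ) < l' then (k - l).choose (l' - l) • b l' (padLeft γ g h.le) else 0 := by
    intro l'
    rcases eq_or_ne l' l with rfl | hne
    · simp [padLeft_self]
    · have hne' : (l' : ℕ) ≠ l := Fin.val_ne_of_ne hne
      rw [if_neg hne, zero_add]
      split_ifs <;> first | rfl | omega
  simp only [actDeriv, coord, Tact_apply, hsplit, Finset.sum_add_distrib, Finset.sum_ite_eq',
    Finset.mem_univ, if_true, add_sub_cancel_left, Finset.sum_apply, dite_apply, Pi.smul_apply,
    Pi.zero_apply]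

lemma actDerivIter_Tact_coord_eq_zero {j : ℕ} (γ : Fin j → Γ) (l : Fin (k + 1))
    (g : Fin l → Γ) (hlj : k < l + j) :
    actDerivIter (Tact k) j γ (coord l g) = 0 := by
  induction j generalizing l with
  | zero => omega
  | succ j ih =>
    rw [actDerivIter, actDeriv_Tact_coord, actDerivIter_sum]
    refine Finset.sum_eq_zero fun l' _ => ?_
    split_ifs with h
    · rw [actDerivIter_nsmul, ih _ _ _ (by omega), smul_zero]
    · exact actDerivIter_zero ..

lemma actDerivIter_Tact_coord_of_add_eq {j : ℕ} (γ : Fin j → Γ) (l : Fin (k + 1))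
    (g : Fin l → Γ) (hlj : l + j = k) :
    actDerivIter (Tact k) j γ (coord l g) =
      (k - l).factorial • coord (Fin.last k) (revAppend γ g (by rw [Fin.val_last]; omega)) := by
  induction j generalizing l with
  | zero =>
    obtain rfl : l = Fin.last k := Fin.ext hlj
    simp only [actDerivIter, Fin.val_last, Nat.sub_self, Nat.factorial_zero, one_smul]
    congr 1
    funext t
    simp [revAppend, Fin.append_cast_apply]
  | succ j ih =>
    have hl : (l : ℕ) + 1 < k + 1 := by omega
    rw [actDerivIter, actDeriv_Tact_coord, actDerivIter_sum, Finset.sum_eq_single ⟨l + 1, hl⟩]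
    · have hcoef : (k - l).choose (l + 1 - l) * (k - (l + 1)).factorial = (k - l).factorial := by
        rw [Nat.add_sub_cancel_left, Nat.choose_one_right, show k - (l + 1) = k - l - 1 by omega,
          Nat.mul_factorial_pred (by omega)]
      simp only [Fin.val_mk]
      rw [dif_pos (Nat.lt_succ_self _), actDerivIter_nsmul, ih _ ⟨l + 1, hl⟩ _ (by simp only; omega),
        smul_smul, hcoef, revAppend_succ]
    · intro l' _ hne
      have hne' : (l' : ℕ) ≠ l + 1 := fun h => hne (Fin.ext h)
      split_ifs with h
      · rw [actDerivIter_nsmul, actDerivIter_Tact_coord_eq_zero _ _ _ (by omega), smul_zero]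
      · exact actDerivIter_zero ..
    · exact fun h => absurd (Finset.mem_univ _) h

end Coordinates

theorem evalZero_deriv_general {Γ : Type*} [AddCommGroup Γ] (k : ℕ)
    (b : ∀ i : Fin (k + 1), (Fin (i : ℕ) → Γ) → AddCircle (1 : ℝ))
    (hb : ∀ i : Fin (k + 1), IsMultilinear (b i) ∧ IsSymmetric (b i)) :
    (∀ γ : Fin k → Γ,
        actDerivIter (fun γ0 => Tact k γ0) k γ (evalZero k) b =
          k.factorial • b ⟨k, Nat.lt_succ_self k⟩ γ) ∧
    (∀ γ : Fin (k + 1) → Γ,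
        actDerivIter (fun γ0 => Tact k γ0) (k + 1) γ (evalZero k) b = 0) := by
  refine ⟨fun γ => ?_, fun γ => ?_⟩
  · refine (congrFun (actDerivIter_Tact_coord_of_add_eq γ 0 Fin.elim0 (zero_add k)) b).trans ?_
    simp only [Pi.smul_apply, coord, Fin.val_zero, Nat.sub_zero]
    refine congrArg (k.factorial • ·)
      ((congrArg (b (Fin.last k)) ?_).trans ((hb (Fin.last k)).2 Fin.revPerm γ))
    funext t
    simp [revAppend]
  · exact congrFun (actDerivIter_Tact_coord_eq_zero γ 0 Fin.elim0 (by simp)) b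

/-- On the space of tuples `(b_i)_{i=0}^k` of symmetric multilinear maps with the action
`T`, the evaluation `P((b_i)_i) = b_0` of the first coordinate satisfies
`∂_{γ_1}⋯∂_{γ_k} P (x) = k! • b_k(γ_1,…,γ_k)` at every symmetric multilinear tuple `x`,
and in particular `∂_{γ_1}⋯∂_{γ_{k+1}} P = 0`. -/
theorem evalZero_deriv {Γ : Type*} [AddCommGroup Γ] (k : ℕ) (hk : 1 ≤ k)
    (b : ∀ i : Fin (k + 1), (Fin (i : ℕ) → Γ) → AddCircle (1 : ℝ))
    (hb : ∀ i : Fin (k + 1), IsMultilinear (b i) ∧ IsSymmetric (b i)) :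
    (∀ γ : Fin k → Γ,
        actDerivIter (fun γ0 => Tact k γ0) k γ (evalZero k) b =
          k.factorial • b ⟨k, Nat.lt_succ_self k⟩ γ) ∧
    (∀ γ : Fin (k + 1) → Γ,
        actDerivIter (fun γ0 => Tact k γ0) (k + 1) γ (evalZero k) b = 0) :=
  evalZero_deriv_general k b hb
end
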